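/- Let G be an almost peripheral graph of order n ≥ 7 with maximum degree Δ. Then either Δ = n − 1 or 3 ≤ Δ ≤ n − 4; in particular Δ ≠ n − 2 and Δ ≠ n − 3. -/

import Mathlib

open SimpleGraph

/-- The eccentricity of a vertex `v`: the maximum distance from `v` to any vertex. -/
noncomputable def graphEcc {V : Type*} [Fintype V] (G : SimpleGraph V) (v : V) : ℕ :=
  Finset.univ.sup fun u => G.dist v u

/-- The radius of a graph: the minimum eccentricity over all vertices. -/
noncomputable def graphRadius {V : Type*} [Fintype V] (G : SimpleGraph V) : ℕ :=
  sInf (Set.range (graphEcc G))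

/-- The diameter of a graph: the maximum eccentricity over all vertices. -/
noncomputable def graphDiam {V : Type*} [Fintype V] (G : SimpleGraph V) : ℕ :=
  Finset.univ.sup (graphEcc G)

/-- A connected graph of order `n` is almost self-centered if it has exactly `n - 2`
central vertices (vertices whose eccentricity equals the radius). -/
def IsAlmostSelfCentered {V : Type*} [Fintype V] (G : SimpleGraph V) : Prop :=
  G.Connected ∧ Nat.card {v : V | graphEcc G v = graphRadius G} = Fintype.card V - 2

/-- A connected graph of order `n` is almost peripheral if it has exactly `n - 1`
peripheral vertices (vertices whose eccentricity equals the diameter). -/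
def IsAlmostPeripheral {V : Type*} [Fintype V] (G : SimpleGraph V) : Prop :=
  G.Connected ∧ Nat.card {v : V | graphEcc G v = graphDiam G} = Fintype.card V - 1

/-- The maximum degree of a graph. -/
noncomputable def graphMaxDeg {V : Type*} [Fintype V] (G : SimpleGraph V) : ℕ :=
  Finset.univ.sup fun v => (G.neighborSet v).ncard

/-!
Let `u` be the unique non-peripheral vertex. A neighbour of `u` has eccentricity at most
`ecc u + 1`, so `ecc u = diam - 1`; and the neighbour of a pendant vertex has smaller
eccentricity than it, so it must be `u`.

If `diam = 2`, then `u` is adjacent to every other vertex and `Δ = n - 1`. If `diam ≥ 3`, no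
vertex `v` is nonadjacent to at most two other vertices `w₁, w₂`: in each configuration some
neighbour `t ≠ u` of `v` lies within distance two of `w₁` and `w₂`, hence of every vertex,
contradicting `ecc t = diam`. So `Δ ≤ n - 4`. Finally, if `Δ ≤ 2`, the distance spheres around
any vertex have at most two elements and do not grow, and counting them forces a pendant vertex
too far from `u`.
-/

open Finset

namespace SimpleGraph

variable {V : Type*} {G : SimpleGraph V} {a b x : V}

lemma Connected.exists_dist_eq_of_le_dist (hc : G.Connected) {k : ℕ} (hk : k ≤ G.dist a b) :
    ∃ c, G.dist a c = k ∧ G.dist c b = G.dist a b - k := by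
  obtain ⟨p, hp⟩ := hc.exists_walk_length_eq_dist a b
  have htake : G.dist a (p.getVert k) ≤ k := (dist_le (p.take k)).trans (by simp)
  have hdrop : G.dist (p.getVert k) b ≤ G.dist a b - k := (dist_le (p.drop k)).trans (by simp [hp])
  have := hc.dist_triangle (u := a) (v := p.getVert k) (w := b)
  exact ⟨p.getVert k, by omega, by omega⟩

lemma Connected.exists_adj_dist_eq_sub_one (hc : G.Connected) (hab : a ≠ b) :
    ∃ c, G.Adj a c ∧ G.dist c b = G.dist a b - 1 := by
  obtain ⟨c, h1, h2⟩ := hc.exists_dist_eq_of_le_dist (hc.pos_dist_of_ne hab)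
  exact ⟨c, dist_eq_one_iff_adj.mp h1, h2⟩

lemma Connected.exists_dist_eq_adj (hc : G.Connected) {k : ℕ} (h : G.dist a b = k + 1) :
    ∃ c, G.dist a c = k ∧ G.Adj c b := by
  obtain ⟨c, h1, h2⟩ := hc.exists_dist_eq_of_le_dist (show k ≤ G.dist a b by omega)
  exact ⟨c, h1, dist_eq_one_iff_adj.mp (by omega)⟩

lemma Connected.dist_eq_dist_add_one_of_pendant (hc : G.Connected) (hab : G.Adj a b)
    (hpend : ∀ z, G.Adj a z → z = b) (hx : x ≠ a) : G.dist a x = G.dist b x + 1 := by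
  obtain ⟨c, hac, hcx⟩ := hc.exists_adj_dist_eq_sub_one hx.symm
  obtain rfl := hpend c hac
  have := hc.pos_dist_of_ne hx.symm
  omega

lemma three_le_degree [Fintype (G.neighborSet a)] {x y z : V} (hx : G.Adj a x) (hy : G.Adj a y)
    (hz : G.Adj a z) (hxy : x ≠ y) (hxz : x ≠ z) (hyz : y ≠ z) : 3 ≤ G.degree a := by
  classical
  rw [← card_neighborFinset_eq_degree]
  calc 3 = #{x, y, z} := (card_eq_three.mpr ⟨x, y, z, hxy, hxz, hyz, rfl⟩).symm
    _ ≤ _ := card_le_card (by simp [insert_subset_iff, hx, hy, hz])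

end SimpleGraph

section Eccentricity

variable {V : Type*} [Fintype V] {G : SimpleGraph V} {a b v w : V}

lemma dist_le_graphEcc (v w : V) : G.dist v w ≤ graphEcc G v :=
  le_sup (f := fun w => G.dist v w) (mem_univ w)

lemma graphEcc_le_iff {k : ℕ} : graphEcc G v ≤ k ↔ ∀ w, G.dist v w ≤ k := by
  simp [graphEcc]

lemma exists_dist_eq_graphEcc [Nonempty V] (G : SimpleGraph V) (v : V) :
    ∃ w, G.dist v w = graphEcc G v := by
  obtain ⟨w, -, hw⟩ := exists_mem_eq_sup univ univ_nonempty fun w => G.dist v w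
  exact ⟨w, hw.symm⟩

lemma graphEcc_le_graphDiam (v : V) : graphEcc G v ≤ graphDiam G :=
  le_sup (f := graphEcc G) (mem_univ v)

lemma graphEcc_le_graphEcc_add_one (h : G.Adj v w) : graphEcc G w ≤ graphEcc G v + 1 :=
  graphEcc_le_iff.mpr fun x => by
    have := h.diff_dist_adj (u := x)
    rw [G.dist_comm (u := x), G.dist_comm (u := x)] at this
    have := dist_le_graphEcc (G := G) v x
    omega

lemma isUniversal_of_graphEcc_le_one (hc : G.Connected) (h : graphEcc G v ≤ 1) :
    G.IsUniversal v := fun w hvw =>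
  dist_eq_one_iff_adj.mp <| by
    have := hc.pos_dist_of_ne hvw
    have := (dist_le_graphEcc (G := G) v w).trans h
    omega

lemma graphEcc_lt_of_pendant (hc : G.Connected) (hab : G.Adj a b)
    (hpend : ∀ z, G.Adj a z → z = b) (hb : 2 ≤ graphEcc G b) : graphEcc G b < graphEcc G a := by
  have : Nonempty V := ⟨a⟩
  obtain ⟨x, hx⟩ := exists_dist_eq_graphEcc G b
  have hxa : x ≠ a := by
    rintro rfl
    rw [dist_comm, dist_eq_one_iff_adj.mpr hab] at hx
    omega
  have := hc.dist_eq_dist_add_one_of_pendant hab hpend hxa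
  have := dist_le_graphEcc (G := G) a x
  omega

lemma graphEcc_le_two_of_cover {w₁ w₂ t : V}
    (hcov : ∀ x, x = v ∨ x = w₁ ∨ x = w₂ ∨ G.Adj v x) (ht : G.Adj v t)
    (h₁ : G.dist t w₁ ≤ 2) (h₂ : G.dist t w₂ ≤ 2) : graphEcc G t ≤ 2 := by
  refine graphEcc_le_iff.mpr fun x => ?_
  rcases hcov x with rfl | rfl | rfl | hx
  · rw [dist_comm, dist_eq_one_iff_adj.mpr ht]; omega
  · exact h₁
  · exact h₂
  · have := hx.diff_dist_adj (u := t)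
    rw [dist_eq_one_iff_adj.mpr ht.symm] at this
    omega

lemma graphMaxDeg_eq_maxDegree [DecidableRel G.Adj] : graphMaxDeg G = G.maxDegree := by
  have hdeg (v : V) : (G.neighborSet v).ncard = G.degree v := by
    rw [← Nat.card_coe_set_eq, Nat.card_eq_fintype_card, card_neighborSet_eq_degree]
  refine le_antisymm (Finset.sup_le fun v _ => hdeg v ▸ G.degree_le_maxDegree v) ?_
  exact G.maxDegree_le_of_forall_degree_le _ fun v =>
    hdeg v ▸ le_sup (f := fun v => (G.neighborSet v).ncard) (mem_univ v)

end Eccentricity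

section Spheres

variable {V : Type*} [Fintype V] {G : SimpleGraph V}

noncomputable def distSphere (G : SimpleGraph V) (p : V) (k : ℕ) : Finset V :=
  univ.filter fun w => G.dist p w = k

@[simp]
lemma mem_distSphere {p w : V} {k : ℕ} : w ∈ distSphere G p k ↔ G.dist p w = k := by
  simp [distSphere]

lemma card_eq_sum_card_distSphere (hc : G.Connected) (p : V) :
    Fintype.card V = ∑ k ∈ range (graphEcc G p), #(distSphere G p (k + 1)) + 1 := by
  have hzero : distSphere G p 0 = {p} := by
    ext w
    simp [hc.dist_eq_zero_iff, eq_comm]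
  rw [← card_univ, card_eq_sum_card_fiberwise (f := G.dist p) (t := range (graphEcc G p + 1))
    fun w _ => mem_range.mpr (Nat.lt_succ_of_le (dist_le_graphEcc p w)), sum_range_succ']
  change _ + #(distSphere G p 0) = _
  rw [hzero, card_singleton]
  rfl

lemma distSphere_nonempty (hc : G.Connected) {p : V} {k : ℕ} (hk : k ≤ graphEcc G p) :
    (distSphere G p k).Nonempty := by
  have : Nonempty V := ⟨p⟩
  obtain ⟨w, hw⟩ := exists_dist_eq_graphEcc G p
  obtain ⟨c, hpc, -⟩ := hc.exists_dist_eq_of_le_dist (hw ▸ hk)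
  exact ⟨c, mem_distSphere.mpr hpc⟩

variable [DecidableRel G.Adj]

lemma card_distSphere_one (p : V) : #(distSphere G p 1) = G.degree p := by
  rw [← card_neighborFinset_eq_degree]
  congr 1
  ext w
  simp

/-- When `Δ ≤ 2`, a vertex at distance `k ≥ 1` from `p` has a neighbour at distance `k - 1`,
so at most one neighbour at distance `k + 1`. -/
lemma card_distSphere_succ_le (hc : G.Connected) (hΔ : G.maxDegree ≤ 2) {p : V} {k : ℕ}
    (hk : 1 ≤ k) : #(distSphere G p (k + 1)) ≤ #(distSphere G p k) := by
  have hpred (w : V) (hw : w ∈ distSphere G p (k + 1)) :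
      ∃ c, G.dist p c = k ∧ G.Adj c w := hc.exists_dist_eq_adj (mem_distSphere.mp hw)
  choose! f hfdist hfadj using hpred
  refine card_le_card_of_injOn f (fun w hw => mem_distSphere.mpr (hfdist w hw)) ?_
  intro a ha b hb hab
  by_contra hne
  obtain ⟨c', hc', hadj⟩ := hc.exists_dist_eq_adj (k := k - 1) (by rw [hfdist a ha]; omega)
  have ha' := mem_distSphere.mp ha
  have hb' := mem_distSphere.mp hb
  have : 3 ≤ G.degree (f a) :=
    three_le_degree (hfadj a ha) (hab ▸ hfadj b hb) hadj.symm hne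
      (by rintro rfl; omega) (by rintro rfl; omega)
  have := G.degree_le_maxDegree (f a)
  omega

lemma card_distSphere_le_of_le (hc : G.Connected) (hΔ : G.maxDegree ≤ 2) {p : V} {j k : ℕ}
    (hj : 1 ≤ j) (hjk : j ≤ k) : #(distSphere G p k) ≤ #(distSphere G p j) := by
  induction k, hjk using Nat.le_induction with
  | base => exact le_rfl
  | succ k hk ih => exact (card_distSphere_succ_le hc hΔ (hj.trans hk)).trans ih

lemma card_distSphere_le_two (hc : G.Connected) (hΔ : G.maxDegree ≤ 2) {p : V} {k : ℕ}
    (hk : 1 ≤ k) : #(distSphere G p k) ≤ 2 :=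
  (card_distSphere_le_of_le hc hΔ le_rfl hk).trans
    ((card_distSphere_one p).trans_le ((G.degree_le_maxDegree p).trans hΔ))

lemma card_le_two_mul_graphEcc_add_one (hc : G.Connected) (hΔ : G.maxDegree ≤ 2) (p : V) :
    Fintype.card V ≤ 2 * graphEcc G p + 1 := by
  rw [card_eq_sum_card_distSphere hc p]
  have := sum_le_sum fun k (_ : k ∈ range (graphEcc G p)) =>
    card_distSphere_le_two hc hΔ (p := p) (Nat.le_add_left 1 k)
  simp only [sum_const, card_range, smul_eq_mul] at this
  omega

/-- If `p` has eccentricity `m` with `2m > n`, its spheres cannot all have two vertices, so the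
spheres of radius `m - 1` and `m` are singletons and the vertex farthest from `p` is pendant. -/
lemma degree_le_one_of_dist_eq_graphEcc (hc : G.Connected) (hΔ : G.maxDegree ≤ 2) {p z : V}
    (hn : Fintype.card V < 2 * graphEcc G p) (hz : G.dist p z = graphEcc G p) :
    G.degree z ≤ 1 := by
  have hsum := card_eq_sum_card_distSphere hc p
  set m := graphEcc G p
  have hm : 2 ≤ m := by
    have : 1 < Fintype.card V :=
      Fintype.one_lt_card_iff.mpr ⟨p, z, by rintro rfl; simp at hz; omega⟩
    omega
  have hlast : #(distSphere G p (m - 1)) ≤ 1 := by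
    by_contra! h2
    rw [show m = m - 1 + 1 by omega, sum_range_succ, Nat.sub_add_cancel (by omega)] at hsum
    have := sum_le_sum fun k (hk : k ∈ range (m - 1)) => show 2 ≤ _ from
      h2.trans_le (card_distSphere_le_of_le hc hΔ (Nat.le_add_left 1 k) (mem_range.mp hk))
    simp only [sum_const, card_range, smul_eq_mul] at this
    have := (distSphere_nonempty hc (le_refl m)).card_pos
    omega
  have hsphere : #(distSphere G p m) ≤ 1 :=
    (card_distSphere_le_of_le hc hΔ (by omega) (Nat.sub_le m 1)).trans hlast
  rw [← card_neighborFinset_eq_degree]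
  refine (card_le_card fun y hy => mem_distSphere.mpr ?_).trans hlast
  have hzy := (mem_neighborFinset G z y).mp hy
  have hle := dist_le_graphEcc (G := G) p y
  have hstep := hzy.diff_dist_adj (u := p)
  have : G.dist p y ≠ m := fun h =>
    hzy.ne' (card_le_one.mp hsphere y (mem_distSphere.mpr h) z (mem_distSphere.mpr hz))
  omega

end Spheres

section AlmostPeripheral

variable {V : Type*} [Fintype V] {G : SimpleGraph V}

/-- `u` is the unique non-peripheral vertex of the connected graph `G`. -/
structure IsAlmostPeripheralAt (G : SimpleGraph V) (u : V) : Prop where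
  connected : G.Connected
  graphEcc_ne : graphEcc G u ≠ graphDiam G
  graphEcc_eq : ∀ v, v ≠ u → graphEcc G v = graphDiam G

lemma IsAlmostPeripheral.exists_isAlmostPeripheralAt (h : IsAlmostPeripheral G) :
    ∃ u, IsAlmostPeripheralAt G u := by
  classical
  obtain ⟨hc, hcard⟩ := h
  have : Nonempty V := hc.nonempty
  have hper : #(univ.filter fun v => graphEcc G v = graphDiam G) = Fintype.card V - 1 := by
    rw [← Fintype.card_subtype, ← Nat.card_eq_fintype_card]
    exact hcard
  have hcompl : #(univ.filter fun v => graphEcc G v ≠ graphDiam G) = 1 := by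
    rw [filter_not, card_sdiff_of_subset (filter_subset _ _), card_univ, hper]
    have := Fintype.card_pos (α := V)
    omega
  obtain ⟨u, hu⟩ := card_eq_one.mp hcompl
  have hmem (v : V) : graphEcc G v ≠ graphDiam G ↔ v = u := by
    simpa using congrArg (v ∈ ·) hu
  exact ⟨u, ⟨hc, (hmem u).mpr rfl, fun v hv => not_not.mp ((hmem v).not.mpr hv)⟩⟩

namespace IsAlmostPeripheralAt

variable {u a b v w₁ w₂ : V} (h : IsAlmostPeripheralAt G u)
include h

lemma eq_of_graphEcc_lt (hv : graphEcc G v < graphDiam G) : v = u := by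
  by_contra hvu
  exact hv.ne (h.graphEcc_eq v hvu)

lemma exists_adj : ∃ x, G.Adj u x := by
  obtain ⟨v, hv⟩ : ∃ v, v ≠ u := by
    by_contra! hall
    refine h.graphEcc_ne (le_antisymm (graphEcc_le_graphDiam u) (Finset.sup_le fun v _ => ?_))
    rw [hall v]
  obtain ⟨x, hx, -⟩ := h.connected.exists_adj_dist_eq_sub_one hv.symm
  exact ⟨x, hx⟩

lemma graphEcc_add_one : graphEcc G u + 1 = graphDiam G := by
  obtain ⟨x, hx⟩ := h.exists_adj
  have := graphEcc_le_graphEcc_add_one hx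
  rw [h.graphEcc_eq x hx.ne'] at this
  have := graphEcc_le_graphDiam (G := G) u
  have := h.graphEcc_ne
  omega

lemma one_le_graphEcc : 1 ≤ graphEcc G u := by
  obtain ⟨x, hx⟩ := h.exists_adj
  exact (dist_eq_one_iff_adj.mpr hx).symm.le.trans (dist_le_graphEcc u x)

lemma eq_of_pendant (hab : G.Adj a b) (hpend : ∀ z, G.Adj a z → z = b) : b = u := by
  refine h.eq_of_graphEcc_lt ?_
  by_contra! hb
  have := graphEcc_lt_of_pendant h.connected hab hpend
    (by have := h.graphEcc_add_one; have := h.one_le_graphEcc; omega)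
  have := graphEcc_le_graphDiam (G := G) a
  omega

lemma eq_of_adj_of_cover (hd : 3 ≤ graphDiam G)
    (hcov : ∀ x, x = v ∨ x = w₁ ∨ x = w₂ ∨ G.Adj v x) {t : V} (ht : G.Adj v t)
    (h₁ : G.dist t w₁ ≤ 2) (h₂ : G.dist t w₂ ≤ 2) : t = u :=
  h.eq_of_graphEcc_lt ((graphEcc_le_two_of_cover hcov ht h₁ h₂).trans_lt hd)

/-- A vertex `w₁` at distance `≥ 3` from `v` can only be adjacent to `w₂`, so it is pendant and
`w₂` is the centre `u`; a common neighbour of `v` and `w₂` then has eccentricity two. -/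
lemma false_of_cover_of_three_le_dist (hd : 3 ≤ graphDiam G)
    (hcov : ∀ x, x = v ∨ x = w₁ ∨ x = w₂ ∨ G.Adj v x) (hw₁ : 3 ≤ G.dist v w₁) : False := by
  have hc := h.connected
  have hpend : ∀ z, G.Adj w₁ z → z = w₂ := by
    intro z hz
    have := hz.diff_dist_adj (u := v)
    rcases hcov z with rfl | rfl | rfl | hvz
    · rw [G.dist_comm, dist_eq_one_iff_adj.mpr hz] at hw₁; omega
    · exact (G.irrefl hz).elim
    · rfl
    · rw [dist_eq_one_iff_adj.mpr hvz] at this; omega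
  obtain ⟨z, hz, -⟩ :=
    hc.exists_adj_dist_eq_sub_one (a := w₁) (b := v) (by rintro rfl; simp at hw₁)
  have hw₁w₂ : G.Adj w₁ w₂ := hpend z hz ▸ hz
  obtain rfl := h.eq_of_pendant hw₁w₂ hpend
  obtain ⟨y, hvy, hyw₁⟩ := hc.exists_dist_eq_of_le_dist (show 2 ≤ G.dist v w₁ by omega)
  obtain rfl : y = w₂ := by
    rcases hcov y with rfl | rfl | rfl | hy
    · simp at hvy
    · simp at hyw₁; omega
    · rfl
    · rw [dist_eq_one_iff_adj.mpr hy] at hvy; omega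
  obtain ⟨t, hvt, htw₂⟩ := hc.exists_dist_eq_adj (show G.dist v y = 1 + 1 from hvy)
  have htw₁ := hw₁w₂.symm.diff_dist_adj (u := t)
  rw [dist_eq_one_iff_adj.mpr htw₂] at htw₁
  exact htw₂.ne (h.eq_of_adj_of_cover hd hcov (dist_eq_one_iff_adj.mp hvt) (by omega)
    (by rw [dist_eq_one_iff_adj.mpr htw₂]; omega))

/-- A neighbour of `w₁` on a geodesic towards `w₂` (or, if `w₁` and `w₂` are adjacent, a common
neighbour of `u` and `w₁`) has eccentricity two. -/
lemma false_of_cover_of_dist_eq_two (hd : graphDiam G = 3)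
    (hcov : ∀ x, x = u ∨ x = w₁ ∨ x = w₂ ∨ G.Adj u x) (hw₁ : G.dist u w₁ = 2) : False := by
  have hc := h.connected
  by_cases hclose : G.dist w₁ w₂ ≤ 1
  · obtain ⟨t, hut, htw₁⟩ := hc.exists_dist_eq_adj (show G.dist u w₁ = 1 + 1 from hw₁)
    have := hc.dist_triangle (u := t) (v := w₁) (w := w₂)
    rw [dist_eq_one_iff_adj.mpr htw₁] at this
    have hut := dist_eq_one_iff_adj.mp hut
    exact hut.ne' (h.eq_of_adj_of_cover hd.ge hcov hut
      (by rw [dist_eq_one_iff_adj.mpr htw₁]; omega) (by omega))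
  · obtain ⟨c, hw₁c, hcw₂⟩ :=
      hc.exists_adj_dist_eq_sub_one (a := w₁) (b := w₂) (by rintro rfl; simp at hclose)
    have hfar : G.dist w₁ w₂ ≤ 3 :=
      hd ▸ (dist_le_graphEcc w₁ w₂).trans (graphEcc_le_graphDiam w₁)
    rcases hcov c with rfl | rfl | rfl | huc
    · rw [G.dist_comm, dist_eq_one_iff_adj.mpr hw₁c] at hw₁; omega
    · exact G.irrefl hw₁c
    · simp at hcw₂; omega
    · exact huc.ne' (h.eq_of_adj_of_cover hd.ge hcov huc
        (by rw [G.dist_comm, dist_eq_one_iff_adj.mpr hw₁c]; omega) (by omega))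

lemma exists_not_adj (hd : 3 ≤ graphDiam G) (v w₁ w₂ : V) :
    ∃ x, x ≠ v ∧ x ≠ w₁ ∧ x ≠ w₂ ∧ ¬ G.Adj v x := by
  by_contra! hall
  have hcov (x : V) : x = v ∨ x = w₁ ∨ x = w₂ ∨ G.Adj v x := by
    by_cases x = v <;> by_cases x = w₁ <;> by_cases x = w₂ <;> simp_all
  have hcov' (x : V) : x = v ∨ x = w₂ ∨ x = w₁ ∨ G.Adj v x := by
    rcases hcov x with hx | hx | hx | hx <;> simp [hx]
  by_cases h₁ : 3 ≤ G.dist v w₁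
  · exact h.false_of_cover_of_three_le_dist hd hcov h₁
  by_cases h₂ : 3 ≤ G.dist v w₂
  · exact h.false_of_cover_of_three_le_dist hd hcov' h₂
  have hecc : graphEcc G v ≤ 2 := graphEcc_le_iff.mpr fun x => by
    rcases hcov x with rfl | rfl | rfl | hx
    · simp
    · omega
    · omega
    · rw [dist_eq_one_iff_adj.mpr hx]; omega
  obtain rfl := h.eq_of_graphEcc_lt (hecc.trans_lt hd)
  have hd3 : graphDiam G = 3 := by have := h.graphEcc_add_one; omega
  have : Nonempty V := ⟨v⟩
  obtain ⟨x, hx⟩ := exists_dist_eq_graphEcc G v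
  have hx2 : G.dist v x = 2 := by have := h.graphEcc_add_one; omega
  rcases hcov x with rfl | rfl | rfl | hvx
  · simp at hx2
  · exact h.false_of_cover_of_dist_eq_two hd3 hcov hx2
  · exact h.false_of_cover_of_dist_eq_two hd3 hcov' hx2
  · rw [dist_eq_one_iff_adj.mpr hvx] at hx2; omega

lemma degree_add_four_le [DecidableRel G.Adj] (hd : 3 ≤ graphDiam G) (v : V) :
    G.degree v + 4 ≤ Fintype.card V := by
  classical
  obtain ⟨x₁, h₁v, -, -, h₁⟩ := h.exists_not_adj hd v v v
  obtain ⟨x₂, h₂v, h₂₁, -, h₂⟩ := h.exists_not_adj hd v x₁ x₁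
  obtain ⟨x₃, h₃v, h₃₁, h₃₂, h₃⟩ := h.exists_not_adj hd v x₁ x₂
  have hdisj : Disjoint (G.neighborFinset v) {v, x₁, x₂, x₃} := by simp [h₁, h₂, h₃]
  have hcard : #({v, x₁, x₂, x₃} : Finset V) = 4 := by
    simp [card_insert_of_notMem, h₁v.symm, h₂v.symm, h₃v.symm, h₂₁.symm, h₃₁.symm, h₃₂.symm]
  have := card_le_univ (G.neighborFinset v ∪ {v, x₁, x₂, x₃})
  rwa [card_union_of_disjoint hdisj, card_neighborFinset_eq_degree, hcard] at this

lemma maxDegree_eq_or_add_four_le [DecidableRel G.Adj] :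
    G.maxDegree = Fintype.card V - 1 ∨ G.maxDegree + 4 ≤ Fintype.card V := by
  have : Nonempty V := ⟨u⟩
  have hecc := h.graphEcc_add_one
  obtain hd | hd : graphDiam G = 2 ∨ 3 ≤ graphDiam G := by have := h.one_le_graphEcc; omega
  · have hu := (G.degree_eq_card_sub_one u).mpr
      (isUniversal_of_graphEcc_le_one h.connected (by omega))
    have := G.degree_le_maxDegree u
    have := G.maxDegree_lt_card_verts
    omega
  · obtain ⟨v, hv⟩ := G.exists_maximal_degree_vertex
    exact .inr (hv ▸ h.degree_add_four_le hd v)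

/-- With `Δ ≤ 2` the spheres around `u` give `n ≤ 2 ecc(u) + 1`, so a neighbour `x` of `u` has
`2 ecc(x) > n` and its farthest vertex `z` is pendant; its neighbour is `u`, whence
`ecc(u) + 1 = dist(x, z) ≤ 2`. -/
lemma three_le_maxDegree [DecidableRel G.Adj] (hn : 4 ≤ Fintype.card V) : 3 ≤ G.maxDegree := by
  by_contra! hΔ
  replace hΔ : G.maxDegree ≤ 2 := by omega
  have hc := h.connected
  have : Nonempty V := ⟨u⟩
  have hecc := h.graphEcc_add_one
  have hu := card_le_two_mul_graphEcc_add_one hc hΔ u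
  obtain ⟨x, hux⟩ := h.exists_adj
  have hx := h.graphEcc_eq x hux.ne'
  obtain ⟨z, hz⟩ := exists_dist_eq_graphEcc G x
  have hdeg := degree_le_one_of_dist_eq_graphEcc hc hΔ (by omega) hz
  obtain ⟨b, hzb, -⟩ := hc.exists_adj_dist_eq_sub_one (a := z) (b := x)
    (by rintro rfl; simp at hz; omega)
  have hpend (y : V) (hy : G.Adj z y) : y = b := by
    rw [← card_neighborFinset_eq_degree] at hdeg
    exact card_le_one.mp hdeg y (by simpa) b (by simpa)
  obtain rfl := h.eq_of_pendant hzb hpend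
  have := hc.dist_triangle (u := x) (v := b) (w := z)
  rw [dist_eq_one_iff_adj.mpr hux.symm, G.dist_comm (u := b),
    dist_eq_one_iff_adj.mpr hzb] at this
  omega

end IsAlmostPeripheralAt

end AlmostPeripheral

theorem maxDeg_of_almostPeripheral {V : Type*} [Fintype V]
    (G : SimpleGraph V) (n : ℕ) (hn : Fintype.card V = n) (h7 : 7 ≤ n)
    (hAP : IsAlmostPeripheral G) :
    (graphMaxDeg G = n - 1 ∨ (3 ≤ graphMaxDeg G ∧ graphMaxDeg G ≤ n - 4)) ∧
      graphMaxDeg G ≠ n - 2 ∧ graphMaxDeg G ≠ n - 3 := by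
  classical
  subst hn
  obtain ⟨u, h⟩ := hAP.exists_isAlmostPeripheralAt
  rw [graphMaxDeg_eq_maxDegree]
  have hlow := h.three_le_maxDegree (by omega)
  have := h.maxDegree_eq_or_add_four_le
  omega
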